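/- Let X and Y be disjoint finite sets with S = X ∪ Y, and suppose h_a : S → Fin m_a, h_b : S → Fin m_b are such that the bipartite graph on Fin m_a ⊕ Fin m_b with an edge (h_a(k), h_b(k)) for each k ∈ S is simple and acyclic (in particular no two distinct keys generate the same edge). Then there exist bitmaps a : Fin m_a → ZMod 2 and b : Fin m_b → ZMod 2 such that for every k ∈ S, a(h_a(k)) + b(h_b(k)) = 0 if k ∈ X and = 1 if k ∈ Y. -/

import Mathlib

/-!
On a forest any edge labelling `t` with values in an abelian group is realised as
`t s(v, w) = f v + f w` for some vertex labelling `f`. Fix a root in every connected component and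
let `f v` be the alternating sum of `t` along the unique path from the root to `v`; for an edge
`vw`, one of the two root paths extends the other by `vw`, which gives the identity. The Othello
bitmaps are `f` restricted to the two sides, for the labelling that puts `0` on the edges of keys
in `X` and `1` elsewhere.
-/

open SimpleGraph Sum

namespace SimpleGraph

variable {V A : Type*} [AddCommGroup A] {G : SimpleGraph V}

/-- `t eₙ - (⋯ - (t e₂ - t e₁))` for the edges `e₁, …, eₙ` of the walk. -/
def Walk.alternatingSum (t : Sym2 V → A) {u v : V} (p : G.Walk u v) : A :=
  p.edges.foldl (fun a e => t e - a) 0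

@[simp]
lemma Walk.alternatingSum_concat (t : Sym2 V → A) {u v w : V} (p : G.Walk u v)
    (h : G.Adj v w) : (p.concat h).alternatingSum t = t s(v, w) - p.alternatingSum t := by
  simp [alternatingSum, edges_concat]

@[simp]
lemma Walk.alternatingSum_copy (t : Sym2 V → A) {u v u' v' : V} (p : G.Walk u v)
    (hu : u = u') (hv : v = v') : (p.copy hu hv).alternatingSum t = p.alternatingSum t := by
  simp [alternatingSum]

lemma IsAcyclic.eq_concat_or_eq_concat (hG : G.IsAcyclic) {r v w : V} {p : G.Walk r v}
    {q : G.Walk r w} (hp : p.IsPath) (hq : q.IsPath) (hadj : G.Adj v w) :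
    q = p.concat hadj ∨ p = q.concat hadj.symm := by
  by_cases hv : v ∈ q.support
  · exact .inl (hG.path_concat hp hq hadj hv)
  · exact .inr (hG.path_concat hq hp hadj.symm
      (hG.mem_support_of_ne_mem_support_of_adj_of_isPath hp hq hadj hv))

lemma IsAcyclic.alternatingSum_add_alternatingSum_of_adj (hG : G.IsAcyclic) (t : Sym2 V → A)
    {r v w : V} {p : G.Walk r v} {q : G.Walk r w} (hp : p.IsPath) (hq : q.IsPath)
    (hadj : G.Adj v w) : p.alternatingSum t + q.alternatingSum t = t s(v, w) := by
  rcases hG.eq_concat_or_eq_concat hp hq hadj with rfl | rfl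
  · simp
  · simp [Sym2.eq_swap]

theorem IsAcyclic.exists_add_eq_of_adj (hG : G.IsAcyclic) (t : Sym2 V → A) :
    ∃ f : V → A, ∀ ⦃v w : V⦄, G.Adj v w → f v + f w = t s(v, w) := by
  have hpath (v : V) : ∃ p : G.Walk (G.connectedComponentMk v).out v, p.IsPath :=
    (ConnectedComponent.exact (Quot.out_eq _)).exists_isPath
  choose p hp using hpath
  refine ⟨fun v => (p v).alternatingSum t, fun v w hadj => ?_⟩
  have hroot : (G.connectedComponentMk w).out = (G.connectedComponentMk v).out := by
    rw [ConnectedComponent.sound hadj.reachable]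
  simpa using hG.alternatingSum_add_alternatingSum_of_adj t (hp v)
    (by simpa using hp w : ((p w).copy hroot rfl).IsPath) hadj

end SimpleGraph

theorem othello_valid_hash_pair_admits_classifier_general {K : Type*} [DecidableEq K]
    (m_a m_b : ℕ) (X Y : Finset K)
    (h_a : K → Fin m_a) (h_b : K → Fin m_b)
    (hsimple : ∀ k ∈ X ∪ Y, ∀ k' ∈ X ∪ Y, k ≠ k' →
      (h_a k, h_b k) ≠ (h_a k', h_b k'))
    (hacyc : (SimpleGraph.fromEdgeSet
        {e | ∃ k ∈ X ∪ Y, e = s(Sum.inl (h_a k), Sum.inr (h_b k))}).IsAcyclic) :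
    ∃ (a : Fin m_a → ZMod 2) (b : Fin m_b → ZMod 2),
      ∀ k ∈ X ∪ Y, a (h_a k) + b (h_b k) = if k ∈ X then 0 else 1 := by
  classical
  obtain ⟨f, hf⟩ := hacyc.exists_add_eq_of_adj fun e =>
    if ∃ k ∈ X, e = s(inl (h_a k), inr (h_b k)) then (0 : ZMod 2) else 1
  refine ⟨f ∘ inl, f ∘ inr, fun k hk => ?_⟩
  have hadj : (fromEdgeSet {e | ∃ k ∈ X ∪ Y, e = s(inl (h_a k), inr (h_b k))}).Adj
      (inl (h_a k)) (inr (h_b k)) := (fromEdgeSet_adj _).mpr ⟨⟨k, hk, rfl⟩, by simp⟩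
  rw [Function.comp_apply, Function.comp_apply, hf hadj]
  by_cases hkX : k ∈ X
  · rw [if_pos ⟨k, hkX, rfl⟩, if_pos hkX]
  · -- by `hsimple`, the edge of a key outside `X` is not the edge of a key in `X`
    rw [if_neg hkX, if_neg]
    rintro ⟨k', hk'X, hedge⟩
    exact hsimple k hk k' (Finset.mem_union_left Y hk'X) (by rintro rfl; exact hkX hk'X)
      (by simpa using hedge)

/-- If the bipartite graph generated by a hash pair `(h_a, h_b)` on the key
set `S = X ∪ Y` is simple (no two distinct keys generate the same edge) and
acyclic, then there exist bitmaps `a`, `b` correctly classifying `X` and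
`Y`: `a (h_a k) + b (h_b k) = 0` for `k ∈ X` and `= 1` for `k ∈ Y`. -/
theorem othello_valid_hash_pair_admits_classifier {K : Type*} [DecidableEq K]
    (m_a m_b : ℕ) (X Y : Finset K) (hXY : Disjoint X Y)
    (h_a : K → Fin m_a) (h_b : K → Fin m_b)
    (hsimple : ∀ k ∈ X ∪ Y, ∀ k' ∈ X ∪ Y, k ≠ k' →
      (h_a k, h_b k) ≠ (h_a k', h_b k'))
    (hacyc : (SimpleGraph.fromEdgeSet
        {e | ∃ k ∈ X ∪ Y, e = s(Sum.inl (h_a k), Sum.inr (h_b k))}).IsAcyclic) :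
    ∃ (a : Fin m_a → ZMod 2) (b : Fin m_b → ZMod 2),
      ∀ k ∈ X ∪ Y, a (h_a k) + b (h_b k) = if k ∈ X then 0 else 1 :=
  othello_valid_hash_pair_admits_classifier_general m_a m_b X Y h_a h_b hsimple hacyc
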